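/- arXiv:2511.04368 — 2 statements merged into one kernel-verified Lean document; each statement's English description precedes it below -/
import Mathlib

section
/- Suppose C₁, C₂ ∈ ℂ are such that the polynomial p(σ) = (σ − i|ξ|)(σ + i|ξ|)(C₁ n + C₂ σ τ) (a polynomial in σ with values in ℂ²) is divisible, componentwise, by (σ − i|ξ|)², where ξ ∈ ℝ² is nonzero and n, τ is an orthonormal basis of ℝ². Then C₁ = C₂ = 0. -/
open Complex Polynomial

/-!
Cancelling one factor `σ − i|ξ|` leaves `σ − i|ξ|` dividing `(σ + i|ξ|)(C₁ n + C₂ σ τ)`; since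
`σ + i|ξ|` does not vanish at `i|ξ| ≠ 0`, the vector `C₁ n + i|ξ| C₂ τ` must be zero, and pairing
it with the orthonormal vectors `n` and `τ` gives `C₁ = 0` and `i|ξ| C₂ = 0`.
-/

namespace Polynomial

theorem isRoot_of_X_sub_C_sq_dvd_mul_X_add_C {R : Type*} [CommRing R] [IsDomain R] {a : R}
    (ha : a + a ≠ 0) {p : R[X]} (h : (X - C a) ^ 2 ∣ (X - C a) * (X + C a) * p) :
    p.IsRoot a := by
  rw [sq, mul_assoc, mul_dvd_mul_iff_left (X_sub_C_ne_zero a), dvd_iff_isRoot] at h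
  simpa [IsRoot, ha] using h

end Polynomial

namespace EuclideanSpace

variable {ι : Type*} [Fintype ι]

theorem sum_ofReal_mul_add_mul (u v w : EuclideanSpace ℝ ι) (c d : ℂ) :
    ∑ j, (u j : ℂ) * (c * v j + d * w j) =
      c * (inner ℝ u v : ℝ) + d * (inner ℝ u w : ℝ) := by
  simp only [PiLp.inner_apply, RCLike.inner_apply, conj_trivial, ofReal_sum, ofReal_mul,
    Finset.mul_sum, ← Finset.sum_add_distrib]
  exact Finset.sum_congr rfl fun j _ => by ring

theorem eq_zero_and_eq_zero_of_forall_mul_add_mul_eq_zero {v w : EuclideanSpace ℝ ι}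
    (hv : ‖v‖ = 1) (hw : ‖w‖ = 1) (hvw : inner ℝ v w = (0 : ℝ)) {c d : ℂ}
    (h : ∀ j, c * v j + d * w j = 0) :
    c = 0 ∧ d = 0 := by
  have hwv : inner ℝ w v = (0 : ℝ) := by rwa [real_inner_comm]
  have hpair (u : EuclideanSpace ℝ ι) :
      c * (inner ℝ u v : ℝ) + d * (inner ℝ u w : ℝ) = 0 := by
    simp [← sum_ofReal_mul_add_mul, h]
  have hc := hpair v
  have hd := hpair w
  simp only [real_inner_self_eq_norm_sq, hv, hw, hvw, hwv] at hc hd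
  exact ⟨by simpa using hc, by simpa using hd⟩

end EuclideanSpace

/-- If each component of the ℂ²-valued polynomial
`σ ↦ (σ − i|ξ|)(σ + i|ξ|)(C₁ n + C₂ σ τ)` is divisible by `(σ − i|ξ|)²`, then
`C₁ = C₂ = 0`. -/
theorem complementing_condition_divisibility
    (ξ n τ : EuclideanSpace ℝ (Fin 2))
    (hξ : ξ ≠ 0)
    (hn : ‖n‖ = 1) (hτ : ‖τ‖ = 1) (hnτ : (inner ℝ n τ : ℝ) = 0)
    (C₁ C₂ : ℂ)
    (h : ∀ j : Fin 2,
      ((X - C (Complex.I * (‖ξ‖ : ℝ))) ^ 2 : ℂ[X]) ∣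
        (X - C (Complex.I * (‖ξ‖ : ℝ))) * (X + C (Complex.I * (‖ξ‖ : ℝ))) *
          (C (C₁ * (n j : ℂ)) + C (C₂ * (τ j : ℂ)) * X)) :
    C₁ = 0 ∧ C₂ = 0 := by
  set a : ℂ := Complex.I * (‖ξ‖ : ℝ)
  have ha : a ≠ 0 := by simp [a, hξ]
  have hroot (j : Fin 2) : C₁ * n j + (C₂ * a) * τ j = 0 := by
    have := isRoot_of_X_sub_C_sq_dvd_mul_X_add_C (by simpa [← two_mul] using ha) (h j)
    simp only [IsRoot, eval_add, eval_mul, eval_C, eval_X] at this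
    linear_combination this
  obtain ⟨hC₁, hC₂a⟩ :=
    EuclideanSpace.eq_zero_and_eq_zero_of_forall_mul_add_mul_eq_zero hn hτ hnτ hroot
  exact ⟨hC₁, (mul_eq_zero.mp hC₂a).resolve_right ha⟩
end

section
/- Let v be a C¹ vector field along the boundary of a planar domain with unit normal n, unit tangent τ, curvature κ satisfying ∂_τ n = κτ, and suppose v·n = 0 on the boundary and the Navier condition 2(Dv)_S n·τ + α v·τ = 0 holds for some function α. Then ((n·∇)v)·τ + (α − κ)(v·τ) = 0 on the boundary. -/
open Matrix

/-!
Differentiating `v · n = 0` along the boundary curve and using `∂_τ n = κ τ` gives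
`(Dv τ) · n = -κ (v · τ)`. This is the transposed half `(Dv)ᵀ n · τ` of the symmetric gradient
in the Navier condition, which therefore becomes `(Dv n) · τ + (α - κ)(v · τ) = 0`.
-/

theorem HasDerivAt.dotProduct {ι : Type*} [Fintype ι] {f g : ℝ → ι → ℝ} {f' g' : ι → ℝ}
    {t : ℝ} (hf : HasDerivAt f f' t) (hg : HasDerivAt g g' t) :
    HasDerivAt (fun s => f s ⬝ᵥ g s) (f' ⬝ᵥ g t + f t ⬝ᵥ g') t := by
  have hfg := HasDerivAt.fun_sum (u := Finset.univ) fun i _ =>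
    (hasDerivAt_pi.mp hf i).fun_mul (hasDerivAt_pi.mp hg i)
  simpa only [_root_.dotProduct, ← Finset.sum_add_distrib] using hfg

theorem fderiv_dotProduct_add_dotProduct_fderiv_eq_zero {E ι : Type*}
    [NormedAddCommGroup E] [NormedSpace ℝ E] [Fintype ι] {f g : E → ι → ℝ} {γ : ℝ → E}
    {γ' : E} {t : ℝ} (hf : DifferentiableAt ℝ f (γ t)) (hg : DifferentiableAt ℝ g (γ t))
    (hγ : HasDerivAt γ γ' t) (hfg : ∀ s, f (γ s) ⬝ᵥ g (γ s) = 0) :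
    fderiv ℝ f (γ t) γ' ⬝ᵥ g (γ t) + f (γ t) ⬝ᵥ fderiv ℝ g (γ t) γ' = 0 := by
  have hderiv := (hf.hasFDerivAt.comp_hasDerivAt t hγ).dotProduct
    (hg.hasFDerivAt.comp_hasDerivAt t hγ)
  have hconst : HasDerivAt (fun s => (f ∘ γ) s ⬝ᵥ (g ∘ γ) s) 0 t := by
    simpa only [Function.comp_apply, hfg] using hasDerivAt_const t (0 : ℝ)
  exact hderiv.unique hconst

theorem transpose_mulVec_dotProduct {ι R : Type*} [Fintype ι] [CommSemiring R]
    (A : Matrix ι ι R) (x y : ι → R) : Aᵀ *ᵥ x ⬝ᵥ y = A *ᵥ y ⬝ᵥ x := by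
  rw [mulVec_transpose, ← dotProduct_mulVec, dotProduct_comm]

theorem navier_boundary_reformulation_general
    (v n τ : (Fin 2 → ℝ) → (Fin 2 → ℝ))
    (κ α : (Fin 2 → ℝ) → ℝ)
    (hv : ContDiff ℝ 1 v) (hn : ContDiff ℝ 1 n)
    (J : (Fin 2 → ℝ) → Matrix (Fin 2) (Fin 2) ℝ)
    (hJ : ∀ x, J x = Matrix.of fun i j => fderiv ℝ v x (Pi.single j 1) i)
    (γ : ℝ → Fin 2 → ℝ)
    (hγ : ∀ t : ℝ, HasDerivAt γ (τ (γ t)) t)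
    (hfrenet : ∀ t : ℝ, fderiv ℝ n (γ t) (τ (γ t)) = κ (γ t) • τ (γ t))
    (htangent : ∀ t : ℝ, v (γ t) ⬝ᵥ n (γ t) = 0)
    (hnavier : ∀ t : ℝ,
      (J (γ t) + (J (γ t))ᵀ).mulVec (n (γ t)) ⬝ᵥ τ (γ t) +
        α (γ t) * (v (γ t) ⬝ᵥ τ (γ t)) = 0) :
    ∀ t : ℝ,
      (J (γ t)).mulVec (n (γ t)) ⬝ᵥ τ (γ t) +
        (α (γ t) - κ (γ t)) * (v (γ t) ⬝ᵥ τ (γ t)) = 0 := by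
  intro t
  have hJ_mulVec : ∀ w, J (γ t) *ᵥ w = fderiv ℝ v (γ t) w := fun w => by
    rw [hJ]
    exact LinearMap.toMatrix'_mulVec (fderiv ℝ v (γ t)).toLinearMap w
  have hdiff := fderiv_dotProduct_add_dotProduct_fderiv_eq_zero
    (hv.differentiable one_ne_zero _) (hn.differentiable one_ne_zero _) (hγ t) htangent
  have htranspose : (J (γ t))ᵀ *ᵥ n (γ t) ⬝ᵥ τ (γ t) = -κ (γ t) * (v (γ t) ⬝ᵥ τ (γ t)) := by
    rw [transpose_mulVec_dotProduct, hJ_mulVec]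
    rw [hfrenet, dotProduct_smul, smul_eq_mul] at hdiff
    linarith
  have hN := hnavier t
  rw [add_mulVec, add_dotProduct, htranspose] at hN
  linarith

/-- Reformulation of the Navier slip condition: if `v·n = 0` and
`2(Dv)_S n·τ + α v·τ = 0` along the boundary curve, with `∂_τ n = κτ`, then
`((n·∇)v)·τ + (α − κ)(v·τ) = 0` along the curve. -/
theorem navier_boundary_reformulation
    (v n τ : (Fin 2 → ℝ) → (Fin 2 → ℝ))
    (κ α : (Fin 2 → ℝ) → ℝ)
    (hv : ContDiff ℝ 1 v) (hn : ContDiff ℝ 1 n)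
    (J : (Fin 2 → ℝ) → Matrix (Fin 2) (Fin 2) ℝ)
    (hJ : ∀ x, J x = Matrix.of fun i j => fderiv ℝ v x (Pi.single j 1) i)
    (γ : ℝ → Fin 2 → ℝ)
    (hγ : ∀ t : ℝ, HasDerivAt γ (τ (γ t)) t)
    (hunit_n : ∀ t : ℝ, n (γ t) ⬝ᵥ n (γ t) = 1)
    (hunit_τ : ∀ t : ℝ, τ (γ t) ⬝ᵥ τ (γ t) = 1)
    (horth : ∀ t : ℝ, n (γ t) ⬝ᵥ τ (γ t) = 0)
    (hfrenet : ∀ t : ℝ, fderiv ℝ n (γ t) (τ (γ t)) = κ (γ t) • τ (γ t))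
    (htangent : ∀ t : ℝ, v (γ t) ⬝ᵥ n (γ t) = 0)
    (hnavier : ∀ t : ℝ,
      (J (γ t) + (J (γ t))ᵀ).mulVec (n (γ t)) ⬝ᵥ τ (γ t) +
        α (γ t) * (v (γ t) ⬝ᵥ τ (γ t)) = 0) :
    ∀ t : ℝ,
      (J (γ t)).mulVec (n (γ t)) ⬝ᵥ τ (γ t) +
        (α (γ t) - κ (γ t)) * (v (γ t) ⬝ᵥ τ (γ t)) = 0 :=
  navier_boundary_reformulation_general v n τ κ α hv hn J hJ γ hγ hfrenet htangent hnavier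
end
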